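/- Telescoping sum bound: if b : ℕ → ℝ is nonincreasing, nonnegative, with b(n) → 0, and G : (0, b(0)] → ℝ is nondecreasing with G(v) = (1/v)exp(−C/v) for a constant C ≥ b(0) > 0, then ∑_{m≥0} exp(−C/(b(n_m) − b(n_{m+1}))) ≤ exp(−C/b(0)) for any strictly increasing sequence (n_m) with n_0 = 0, where terms with b(n_m) = b(n_{m+1}) are interpreted as 0. -/

import Mathlib

/-!
Since `v ↦ exp (-C / v) / v` is nondecreasing on `(0, C]`, each nonzero increment
`d = b (n m) - b (n (m + 1))`, which lies in `(0, b 0]`, satisfies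
`exp (-C / d) ≤ d * exp (-C / b 0) / b 0`. The increments telescope to `b 0`,
so summing gives the bound.
-/

open Filter Topology

lemma exp_neg_div_le_mul_exp_neg_div {C u v : ℝ} (hu : 0 < u) (huv : u ≤ v) (hvC : v ≤ C) :
    Real.exp (-C / u) ≤ u / v * Real.exp (-C / v) := by
  have hv : 0 < v := hu.trans_le huv
  have hgap : v / u - 1 ≤ C / u - C / v := by
    rw [div_sub_one hu.ne', div_sub_div _ _ hu.ne' hv.ne', div_le_div_iff₀ hu (by positivity)]
    nlinarith [mul_nonneg (mul_nonneg hu.le (sub_nonneg.2 huv)) (sub_nonneg.2 hvC)]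
  have hratio : v / u ≤ Real.exp (C / u - C / v) := by
    linarith [Real.add_one_le_exp (C / u - C / v)]
  calc Real.exp (-C / u) = Real.exp (-C / v) / Real.exp (C / u - C / v) := by
        rw [← Real.exp_sub]; ring_nf
    _ ≤ Real.exp (-C / v) / (v / u) :=
        div_le_div_of_nonneg_left (Real.exp_pos _).le (by positivity) hratio
    _ = u / v * Real.exp (-C / v) := by field_simp

lemma Antitone.hasSum_sub_succ {f : ℕ → ℝ} {L : ℝ} (hf : Antitone f)
    (hL : Tendsto f atTop (𝓝 L)) : HasSum (fun m ↦ f m - f (m + 1)) (f 0 - L) := by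
  refine (hasSum_iff_tendsto_nat_of_nonneg (fun m ↦ sub_nonneg.2 (hf m.le_succ)) _).2 ?_
  simp_rw [Finset.sum_range_sub']
  exact tendsto_const_nhds.sub hL

-- The `if` is needed: Lean's `-C / 0 = 0` would otherwise make a vanishing term equal to `1`.
lemma tsum_exp_neg_div_le {ι : Type*} {d : ι → ℝ} {s C : ℝ} (hd : ∀ i, 0 ≤ d i)
    (hs : HasSum d s) (hs0 : 0 < s) (hsC : s ≤ C) :
    ∑' i, (if d i = 0 then 0 else Real.exp (-C / d i)) ≤ Real.exp (-C / s) := by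
  set K := Real.exp (-C / s) / s
  have hterm : ∀ i, (if d i = 0 then 0 else Real.exp (-C / d i)) ≤ d i * K := by
    intro i
    split_ifs with h
    · exact mul_nonneg (hd i) (by positivity)
    · have hdi : d i ≤ s := le_hasSum hs i fun j _ ↦ hd j
      calc Real.exp (-C / d i) ≤ d i / s * Real.exp (-C / s) :=
            exp_neg_div_le_mul_exp_neg_div ((hd i).lt_of_ne' h) hdi hsC
        _ = d i * K := by ring
  have hmajor : HasSum (fun i ↦ d i * K) (s * K) := hs.mul_right K
  have hsummable : Summable fun i ↦ if d i = 0 then 0 else Real.exp (-C / d i) :=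
    hmajor.summable.of_nonneg_of_le (fun i ↦ by split_ifs <;> positivity) hterm
  calc _ ≤ s * K := hasSum_le hterm hsummable.hasSum hmajor
    _ = Real.exp (-C / s) := mul_div_cancel₀ _ hs0.ne'

theorem telescoping_exp_sum_bound_general
    (b : ℕ → ℝ) (hmono : Antitone b)
    (hlim : Filter.Tendsto b Filter.atTop (nhds 0))
    (C : ℝ) (hb0 : 0 < b 0) (hC : b 0 ≤ C)
    (n : ℕ → ℕ) (hn : StrictMono n) (hn0 : n 0 = 0) :
    (∑' m : ℕ, if b (n m) - b (n (m + 1)) = 0 then 0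
      else Real.exp (-C / (b (n m) - b (n (m + 1))))) ≤ Real.exp (-C / b 0) := by
  have hsum : HasSum (fun m ↦ b (n m) - b (n (m + 1))) (b 0) := by
    simpa [hn0] using (hmono.comp_monotone hn.monotone).hasSum_sub_succ
      (hlim.comp hn.tendsto_atTop)
  exact tsum_exp_neg_div_le (fun m ↦ sub_nonneg.2 (hmono (hn.monotone m.le_succ))) hsum hb0 hC

/-- Telescoping sum bound: for `b` nonincreasing, nonnegative, tending to 0,
`C ≥ b 0 > 0`, and strictly increasing indices `n 0 = 0 < n 1 < …`,
`∑_m exp(−C/(b (n m) − b (n (m+1)))) ≤ exp(−C/b 0)`, where terms with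
`b (n m) = b (n (m+1))` are interpreted as `0`. -/
theorem telescoping_exp_sum_bound
    (b : ℕ → ℝ) (hmono : Antitone b) (hnonneg : ∀ n, 0 ≤ b n)
    (hlim : Filter.Tendsto b Filter.atTop (nhds 0))
    (C : ℝ) (hb0 : 0 < b 0) (hC : b 0 ≤ C)
    (n : ℕ → ℕ) (hn : StrictMono n) (hn0 : n 0 = 0) :
    (∑' m : ℕ, if b (n m) - b (n (m + 1)) = 0 then 0
      else Real.exp (-C / (b (n m) - b (n (m + 1))))) ≤ Real.exp (-C / b 0) :=
  telescoping_exp_sum_bound_general b hmono hlim C hb0 hC n hn hn0
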